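/- arXiv:2310.11515 — 2 statements merged into one kernel-verified Lean document; each statement's English description precedes it below -/
import Mathlib

section
/- Elliptical potential lemma: if λ ≥ max{1, L²}, then for every t ≥ 1, Σ_{i=1}^{t} ‖φ_i‖²_{A_i^{−1}} ≤ 2 d · log( (dλ + t L²) / (dλ) ). -/
/-!
Write `xᵢ = ‖φᵢ‖²_{Aᵢ⁻¹}`. By the matrix determinant lemma `det Aᵢ₊₁ = det Aᵢ · (1 + xᵢ)`, so
`∑ log (1 + xᵢ)` telescopes to `log (det A_{t+1} / λᵈ)`. Since `Aᵢ ⪰ λ I` and `‖φᵢ‖² ≤ L² ≤ λ`,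
every `xᵢ ≤ 1`, and on `[0, 1]` we have `x ≤ 2 log (1 + x)`. Finally AM-GM on the eigenvalues
gives `det A_{t+1} ≤ (tr A_{t+1} / d)ᵈ ≤ ((dλ + t L²) / d)ᵈ`.
-/

open Matrix Finset

theorem Real.le_two_mul_log_one_add {x : ℝ} (h0 : 0 ≤ x) (h1 : x ≤ 1) :
    x ≤ 2 * Real.log (1 + x) := by
  have hpos : 0 < 1 + x := by linarith
  have hlog := Real.one_sub_inv_le_log_of_pos hpos
  have hhalf : x / 2 ≤ 1 - (1 + x)⁻¹ := by
    rw [show 1 - (1 + x)⁻¹ = x / (1 + x) by field_simp; ring]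
    gcongr
    linarith
  linarith

theorem Real.prod_le_sum_div_card_pow {ι : Type*} (s : Finset ι) {z : ι → ℝ}
    (hz : ∀ i ∈ s, 0 ≤ z i) : ∏ i ∈ s, z i ≤ ((∑ i ∈ s, z i) / #s) ^ #s := by
  rcases s.eq_empty_or_nonempty with rfl | hs
  · simp
  have hcard : (#s : ℝ) ≠ 0 := by positivity
  have amgm := Real.geom_mean_le_arith_mean_weighted s (fun _ ↦ (#s : ℝ)⁻¹) z
    (fun _ _ ↦ by positivity) (by simp [hcard]) hz
  rw [Real.finsetProd_rpow s z hz, ← mul_sum, inv_mul_eq_div] at amgm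
  calc ∏ i ∈ s, z i = ((∏ i ∈ s, z i) ^ (#s : ℝ)⁻¹) ^ #s :=
        (Real.rpow_inv_natCast_pow (prod_nonneg hz) hs.card_pos.ne').symm
    _ ≤ _ := pow_le_pow_left₀ (Real.rpow_nonneg (prod_nonneg hz) _) amgm _

theorem Finset.sum_Icc_one_eq_sum_range {M : Type*} [AddCommMonoid M] (f : ℕ → M) (t : ℕ) :
    ∑ i ∈ Icc 1 t, f i = ∑ i ∈ range t, f (i + 1) := by
  rw [range_eq_Ico, sum_Ico_add']
  rfl

namespace Matrix

section

variable {n : Type*} [Fintype n] [DecidableEq n]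

theorem det_add_vecMulVec {R : Type*} [CommRing R] {A : Matrix n n R} (hA : IsUnit A.det)
    (u v : n → R) : (A + vecMulVec u v).det = A.det * (1 + v ⬝ᵥ A⁻¹ *ᵥ u) := by
  rw [vecMulVec_eq Unit, det_add_replicateCol_mul_replicateRow hA]
  congr 1
  rw [det_unique, add_apply, one_apply_eq, Matrix.mul_assoc, ← replicateCol_mulVec,
    replicateRow_mul_replicateCol_apply]

theorem PosSemidef.det_le_trace_div_card_pow {A : Matrix n n ℝ} (hA : A.PosSemidef) :
    A.det ≤ (A.trace / Fintype.card n) ^ Fintype.card n := by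
  rw [hA.1.det_eq_prod_eigenvalues, hA.1.trace_eq_sum_eigenvalues]
  simpa using Real.prod_le_sum_div_card_pow univ fun i _ ↦ hA.eigenvalues_nonneg i

theorem PosDef.dotProduct_inv_mulVec_nonneg {A : Matrix n n ℝ} (hA : A.PosDef) (u : n → ℝ) :
    0 ≤ u ⬝ᵥ A⁻¹ *ᵥ u := by
  simpa using hA.posSemidef.inv.dotProduct_mulVec_nonneg u

theorem PosDef.log_det_add_vecMulVec_self {A : Matrix n n ℝ} (hA : A.PosDef) (u : n → ℝ) :
    Real.log (A + vecMulVec u u).det = Real.log A.det + Real.log (1 + u ⬝ᵥ A⁻¹ *ᵥ u) := by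
  have hquad := hA.dotProduct_inv_mulVec_nonneg u
  rw [det_add_vecMulVec hA.det_pos.ne'.isUnit, Real.log_mul hA.det_pos.ne' (by positivity)]

theorem PosSemidef.dotProduct_inv_smul_one_add_mulVec_le {S : Matrix n n ℝ} (hS : S.PosSemidef)
    {lam : ℝ} (hlam : 0 < lam) (u : n → ℝ) :
    u ⬝ᵥ (lam • 1 + S)⁻¹ *ᵥ u ≤ (u ⬝ᵥ u) / lam := by
  have hA : (lam • 1 + S).PosDef := (PosDef.one.smul hlam).add_posSemidef hS
  set y := (lam • 1 + S)⁻¹ *ᵥ u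
  have hAy : (lam • 1 + S) *ᵥ y = u := by
    rw [mulVec_mulVec, mul_nonsing_inv _ hA.det_pos.ne'.isUnit, one_mulVec]
  have hSy : 0 ≤ y ⬝ᵥ S *ᵥ y := by simpa using hS.dotProduct_mulVec_nonneg y
  have hsplit : u ⬝ᵥ y = lam * (y ⬝ᵥ y) + y ⬝ᵥ S *ᵥ y := by
    conv_lhs => rw [← hAy]
    rw [dotProduct_comm, add_mulVec, smul_mulVec, one_mulVec, dotProduct_add, dotProduct_smul,
      smul_eq_mul]
  -- `λ ‖y‖² ≤ u ⬝ᵥ y` and `0 ≤ ‖u - λ y‖²` together give `λ (u ⬝ᵥ y) ≤ ‖u‖²`.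
  have hsq : 0 ≤ (u - lam • y) ⬝ᵥ (u - lam • y) := by
    simpa using dotProduct_self_star_nonneg (u - lam • y)
  have hexpand : (u - lam • y) ⬝ᵥ (u - lam • y) =
      u ⬝ᵥ u - 2 * lam * (u ⬝ᵥ y) + lam * (lam * (y ⬝ᵥ y)) := by
    simp only [sub_dotProduct, dotProduct_sub, smul_dotProduct, dotProduct_smul, smul_eq_mul,
      dotProduct_comm y u]
    ring
  have hlam_yy : lam * (lam * (y ⬝ᵥ y)) ≤ lam * (u ⬝ᵥ y) :=
    mul_le_mul_of_nonneg_left (by linarith) hlam.le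
  rw [le_div_iff₀ hlam]
  linarith

end

theorem posSemidef_sum_vecMulVec_self {ι n : Type*} [Fintype n] (v : ι → n → ℝ)
    (s : Finset ι) : (∑ i ∈ s, vecMulVec (v i) (v i)).PosSemidef :=
  posSemidef_sum s fun i _ ↦ by simpa using posSemidef_vecMulVec_self_star (v i)

def regularizedGram {n : Type*} [DecidableEq n] (lam : ℝ) (v : ℕ → n → ℝ) (s : ℕ) :
    Matrix n n ℝ :=
  lam • 1 + ∑ i ∈ range s, vecMulVec (v i) (v i)

section

variable {n : Type*} [DecidableEq n] {lam : ℝ} {v : ℕ → n → ℝ}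

@[simp]
theorem regularizedGram_zero : regularizedGram lam v 0 = lam • 1 := by
  simp [regularizedGram]

theorem regularizedGram_succ (s : ℕ) :
    regularizedGram lam v (s + 1) = regularizedGram lam v s + vecMulVec (v s) (v s) := by
  rw [regularizedGram, regularizedGram, sum_range_succ, add_assoc]

variable [Fintype n]

theorem posDef_regularizedGram (hlam : 0 < lam) (s : ℕ) : (regularizedGram lam v s).PosDef :=
  (PosDef.one.smul hlam).add_posSemidef (posSemidef_sum_vecMulVec_self v _)

theorem trace_regularizedGram (s : ℕ) :
    (regularizedGram lam v s).trace = Fintype.card n * lam + ∑ i ∈ range s, v i ⬝ᵥ v i := by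
  simp [regularizedGram, trace_sum, trace_vecMulVec, mul_comm]

theorem sum_log_one_add_eq_log_det_regularizedGram_div (hlam : 0 < lam) (t : ℕ) :
    ∑ s ∈ range t, Real.log (1 + v s ⬝ᵥ (regularizedGram lam v s)⁻¹ *ᵥ v s) =
      Real.log ((regularizedGram lam v t).det / lam ^ Fintype.card n) := by
  have hstep (s : ℕ) : Real.log (1 + v s ⬝ᵥ (regularizedGram lam v s)⁻¹ *ᵥ v s) =
      Real.log (regularizedGram lam v (s + 1)).det - Real.log (regularizedGram lam v s).det := by
    rw [regularizedGram_succ, (posDef_regularizedGram hlam s).log_det_add_vecMulVec_self]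
    ring
  rw [sum_congr rfl fun s _ ↦ hstep s,
    sum_range_sub (fun s ↦ Real.log (regularizedGram lam v s).det),
    Real.log_div (posDef_regularizedGram hlam t).det_pos.ne' (by positivity),
    regularizedGram_zero, det_smul, det_one, mul_one]

theorem sum_dotProduct_inv_regularizedGram_mulVec_le (hlam : 0 < lam)
    (hv : ∀ s, v s ⬝ᵥ v s ≤ lam) (t : ℕ) :
    ∑ s ∈ range t, v s ⬝ᵥ (regularizedGram lam v s)⁻¹ *ᵥ v s ≤
      2 * Real.log ((regularizedGram lam v t).det / lam ^ Fintype.card n) := by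
  rw [← sum_log_one_add_eq_log_det_regularizedGram_div hlam, mul_sum]
  refine sum_le_sum fun s _ ↦ Real.le_two_mul_log_one_add
    ((posDef_regularizedGram hlam s).dotProduct_inv_mulVec_nonneg _) ?_
  calc v s ⬝ᵥ (regularizedGram lam v s)⁻¹ *ᵥ v s ≤ (v s ⬝ᵥ v s) / lam :=
        (posSemidef_sum_vecMulVec_self v _).dotProduct_inv_smul_one_add_mulVec_le hlam _
    _ ≤ 1 := (div_le_one hlam).2 (hv s)

theorem det_regularizedGram_div_le {K : ℝ} (hlam : 0 < lam) (hv : ∀ s, v s ⬝ᵥ v s ≤ K)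
    (t : ℕ) : (regularizedGram lam v t).det / lam ^ Fintype.card n ≤
      ((Fintype.card n * lam + t * K) / (Fintype.card n * lam)) ^ Fintype.card n := by
  have htrace : (regularizedGram lam v t).trace ≤ Fintype.card n * lam + t * K := by
    rw [trace_regularizedGram]
    gcongr
    calc ∑ s ∈ range t, v s ⬝ᵥ v s ≤ ∑ _s ∈ range t, K := sum_le_sum fun s _ ↦ hv s
      _ = t * K := by simp
  have hdet := (posDef_regularizedGram (v := v) hlam t).posSemidef.det_le_trace_div_card_pow
  rw [div_le_iff₀ (by positivity), ← mul_pow, div_mul_eq_mul_div, mul_div_mul_right _ _ hlam.ne']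
  refine hdet.trans ?_
  gcongr
  exact div_nonneg (posDef_regularizedGram hlam t).posSemidef.trace_nonneg (by positivity)

end

end Matrix

theorem elliptical_potential_lemma_general
    (d : ℕ)
    (lam L : ℝ)
    (hlam' : max 1 (L ^ 2) ≤ lam)
    (φ : ℕ → Fin d → ℝ)
    (hφ : ∀ i, Real.sqrt (φ i ⬝ᵥ φ i) ≤ L)
    (A_ : ℕ → Matrix (Fin d) (Fin d) ℝ)
    (hA : ∀ t, A_ t = lam • (1 : Matrix (Fin d) (Fin d) ℝ) +
      ∑ i ∈ Finset.Icc 1 (t - 1), vecMulVec (φ i) (φ i)) :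
    ∀ t, 1 ≤ t →
      ∑ i ∈ Finset.Icc 1 t, (φ i ⬝ᵥ (A_ i)⁻¹ *ᵥ φ i) ≤
        2 * (d : ℝ) * Real.log (((d : ℝ) * lam + (t : ℝ) * L ^ 2) / ((d : ℝ) * lam)) := by
  intro t _
  have hlam : 0 < lam := one_pos.trans_le ((le_max_left _ _).trans hlam')
  have hφL (i : ℕ) : φ i ⬝ᵥ φ i ≤ L ^ 2 := (Real.sqrt_le_iff.1 (hφ i)).2
  set v : ℕ → Fin d → ℝ := fun s ↦ φ (s + 1)
  have hA_succ (s : ℕ) : A_ (s + 1) = regularizedGram lam v s := by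
    rw [hA, Nat.add_sub_cancel, sum_Icc_one_eq_sum_range, regularizedGram]
  calc ∑ i ∈ Icc 1 t, φ i ⬝ᵥ (A_ i)⁻¹ *ᵥ φ i
      = ∑ s ∈ range t, v s ⬝ᵥ (regularizedGram lam v s)⁻¹ *ᵥ v s := by
        simp only [sum_Icc_one_eq_sum_range, hA_succ, v]
    _ ≤ 2 * Real.log ((regularizedGram lam v t).det / lam ^ d) := by
        simpa using sum_dotProduct_inv_regularizedGram_mulVec_le hlam
          (fun s ↦ (hφL _).trans ((le_max_right _ _).trans hlam')) t
    _ ≤ 2 * Real.log (((d * lam + t * L ^ 2) / (d * lam)) ^ d) := by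
        gcongr
        · exact div_pos (posDef_regularizedGram hlam t).det_pos (by positivity)
        · simpa using det_regularizedGram_div_le hlam (fun s ↦ hφL (s + 1)) t
    _ = _ := by rw [Real.log_pow]; ring

/-- elliptical potential lemma: if `λ ≥ max{1, L²}`, then for every
`t ≥ 1`, `Σ_{i=1}^{t} ‖φ_i‖²_{A_i⁻¹} ≤ 2 d · log((dλ + t L²)/(dλ))`. -/
theorem elliptical_potential_lemma
    (d : ℕ) (hd : 1 ≤ d)
    (lam L : ℝ) (hlam : 0 < lam) (hL : 0 < L)
    (hlam' : max 1 (L ^ 2) ≤ lam)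
    (φ : ℕ → Fin d → ℝ)
    (hφ : ∀ i, Real.sqrt (φ i ⬝ᵥ φ i) ≤ L)
    (A_ : ℕ → Matrix (Fin d) (Fin d) ℝ)
    (hA : ∀ t, A_ t = lam • (1 : Matrix (Fin d) (Fin d) ℝ) +
      ∑ i ∈ Finset.Icc 1 (t - 1), vecMulVec (φ i) (φ i)) :
    ∀ t, 1 ≤ t →
      ∑ i ∈ Finset.Icc 1 t, (φ i ⬝ᵥ (A_ i)⁻¹ *ᵥ φ i) ≤
        2 * (d : ℝ) * Real.log (((d : ℝ) * lam + (t : ℝ) * L ^ 2) / ((d : ℝ) * lam)) :=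
  elliptical_potential_lemma_general d lam L hlam' φ hφ A_ hA
end

section
/- For every t ≥ 1, ℓ_{t+1}(θ̂_t) − ℓ_{t+1}(θ*) ≥ (1/2)·‖θ̂_t − θ*‖²_{A_t} − 1/p_min. -/
/-!
Write `ψᵢ := φᵢ(s_{i+1})`. On `P` every `⟨ψᵢ, θ⟩` lies in `(0, 1]`, where `log` is `1`-strongly
concave (`log x + x² / 2` is concave there). Hence `Fₜ(θ) := ∑_{i<t} log ⟨ψᵢ, θ⟩ - (λ/2)‖θ‖²` is
strongly concave with respect to the quadratic form `w ↦ wᵀ Aₜ w`, and comparing `Fₜ` along the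
segment from its maximizer `θ̂ₜ` over the convex set `P` to `θ*` gives
`Fₜ(θ̂ₜ) - Fₜ(θ*) ≥ ½‖θ̂ₜ - θ*‖²_{Aₜ}`. Passing from `ℓₜ` to `ℓₜ₊₁` only adds
`log ⟨ψₜ, θ̂ₜ⟩ - log ⟨ψₜ, θ*⟩ ≥ log p_min - 0 ≥ 1 - 1/p_min`.
-/

open Matrix Finset Filter Topology

section StrongConcavity

variable {E : Type*} [AddCommGroup E] [Module ℝ E]

/-- Strong concavity whose modulus is a function of `x - y` rather than of a norm, so that a
degenerate quadratic form such as `w ↦ wᵀ Aₜ w` with `λ = 0` can serve as modulus. -/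
def StrongConcaveOnWith (s : Set E) (q f : E → ℝ) : Prop :=
  ∀ ⦃x⦄, x ∈ s → ∀ ⦃y⦄, y ∈ s → ∀ ⦃a b : ℝ⦄, 0 ≤ a → 0 ≤ b → a + b = 1 →
    a * f x + b * f y + a * b * (q (x - y) / 2) ≤ f (a • x + b • y)

namespace StrongConcaveOnWith

variable {s t : Set E} {q f : E → ℝ}

lemma mono (hf : StrongConcaveOnWith s q f) (hts : t ⊆ s) : StrongConcaveOnWith t q f :=
  fun _ hx _ hy => hf (hts hx) (hts hy)

lemma sum {ι : Type*} {I : Finset ι} {q f : ι → E → ℝ}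
    (h : ∀ i ∈ I, StrongConcaveOnWith s (q i) (f i)) :
    StrongConcaveOnWith s (fun w => ∑ i ∈ I, q i w) (fun x => ∑ i ∈ I, f i x) := by
  intro x hx y hy a b ha hb hab
  calc a * ∑ i ∈ I, f i x + b * ∑ i ∈ I, f i y + a * b * ((∑ i ∈ I, q i (x - y)) / 2)
      = ∑ i ∈ I, (a * f i x + b * f i y + a * b * (q i (x - y) / 2)) := by
        simp only [Finset.sum_add_distrib, Finset.mul_sum, Finset.sum_div]
    _ ≤ ∑ i ∈ I, f i (a • x + b • y) := Finset.sum_le_sum fun i hi => h i hi hx hy ha hb hab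

lemma half_le_sub_of_isMaxOn (hf : StrongConcaveOnWith s q f) (hs : Convex ℝ s) {u v : E}
    (hmax : IsMaxOn f s u) (hu : u ∈ s) (hv : v ∈ s) : q (u - v) / 2 ≤ f u - f v := by
  have hseg : ∀ τ ∈ Set.Ioo (0 : ℝ) 1, (1 - τ) * (q (u - v) / 2) ≤ f u - f v := by
    rintro τ ⟨hτ0, hτ1⟩
    have hconc := hf hu hv (sub_nonneg.2 hτ1.le) hτ0.le (sub_add_cancel 1 τ)
    have hle := isMaxOn_iff.1 hmax _ (hs hu hv (sub_nonneg.2 hτ1.le) hτ0.le (sub_add_cancel 1 τ))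
    have : τ * ((1 - τ) * (q (u - v) / 2)) ≤ τ * (f u - f v) := by linarith
    exact le_of_mul_le_mul_left this hτ0
  have hlim : Tendsto (fun τ : ℝ => (1 - τ) * (q (u - v) / 2)) (𝓝[>] 0) (𝓝 (q (u - v) / 2)) := by
    have hcont : Continuous fun τ : ℝ => (1 - τ) * (q (u - v) / 2) := by fun_prop
    simpa using tendsto_nhdsWithin_of_tendsto_nhds (hcont.tendsto 0)
  exact le_of_tendsto hlim (eventually_of_mem (Ioo_mem_nhdsGT one_pos) hseg)

end StrongConcaveOnWith

lemma StrongConcaveOn.strongConcaveOnWith_comp {s : Set ℝ} {m : ℝ} {f : ℝ → ℝ}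
    (hf : StrongConcaveOn s m f) (g : E →ₗ[ℝ] ℝ) :
    StrongConcaveOnWith (g ⁻¹' s) (fun w => m * g w ^ 2) (f ∘ g) := by
  intro x hx y hy a b ha hb hab
  have h := hf.2 hx hy ha hb hab
  simp only [smul_eq_mul, Real.norm_eq_abs, sq_abs] at h
  simp only [Function.comp_apply, map_add, map_smul, map_sub, smul_eq_mul]
  linarith

end StrongConcavity

lemma StrongConcaveOnWith.sub_half_mul_dotProduct_self {n : Type*} [Fintype n] {s : Set (n → ℝ)}
    {q f : (n → ℝ) → ℝ} (hf : StrongConcaveOnWith s q f) (lam : ℝ) :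
    StrongConcaveOnWith s (fun w => q w + lam * (w ⬝ᵥ w)) (fun θ => f θ - lam / 2 * (θ ⬝ᵥ θ)) := by
  intro x hx y hy a b ha hb hab
  have h := hf hx hy ha hb hab
  obtain rfl : a = 1 - b := eq_sub_of_add_eq hab
  simp only [add_dotProduct, dotProduct_add, smul_dotProduct, dotProduct_smul, sub_dotProduct,
    dotProduct_sub, dotProduct_comm y x, smul_eq_mul] at h ⊢
  linarith

lemma concaveOn_log_add_sq_div_two :
    ConcaveOn ℝ (Set.Ioc 0 1) fun x : ℝ => Real.log x + x ^ 2 / 2 := by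
  have hderiv : ∀ x : ℝ, 0 < x → HasDerivAt (fun x : ℝ => Real.log x + x ^ 2 / 2) (x⁻¹ + x) x :=
    fun x hx =>
      ((Real.hasDerivAt_log hx.ne').fun_add ((hasDerivAt_pow 2 x).div_const 2)).congr_deriv
        (by norm_num)
  refine AntitoneOn.concaveOn_of_deriv (convex_Ioc 0 1)
    (fun x hx => (hderiv x hx.1).continuousAt.continuousWithinAt) ?_ ?_ <;> rw [interior_Ioc]
  · exact fun x hx => (hderiv x hx.1).differentiableAt.differentiableWithinAt
  · intro x hx y hy hxy
    rw [(hderiv x hx.1).deriv, (hderiv y hy.1).deriv]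
    have hxy1 : x * y ≤ 1 := mul_le_one₀ hx.2.le hy.1.le hy.2.le
    have : y - x ≤ x⁻¹ - y⁻¹ := by
      rw [inv_sub_inv hx.1.ne' hy.1.ne', le_div_iff₀ (mul_pos hx.1 hy.1)]
      exact mul_le_of_le_one_right (sub_nonneg.2 hxy) hxy1
    linarith

lemma strongConcaveOn_log_Ioc : StrongConcaveOn (Set.Ioc 0 1) 1 Real.log := by
  rw [strongConcaveOn_iff_convex]
  refine concaveOn_log_add_sq_div_two.congr fun x _ => ?_
  simp only [Real.norm_eq_abs, sq_abs]; ring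

lemma strongConcaveOnWith_sum_log_dotProduct_sub {n ι : Type*} [Fintype n] {s : Set (n → ℝ)}
    (I : Finset ι) (ψ : ι → n → ℝ) (lam : ℝ) (hs : ∀ θ ∈ s, ∀ i ∈ I, ψ i ⬝ᵥ θ ∈ Set.Ioc 0 1) :
    StrongConcaveOnWith s (fun w => ∑ i ∈ I, (ψ i ⬝ᵥ w) ^ 2 + lam * (w ⬝ᵥ w))
      (fun θ => ∑ i ∈ I, Real.log (ψ i ⬝ᵥ θ) - lam / 2 * (θ ⬝ᵥ θ)) := by
  have hlog := StrongConcaveOnWith.sum fun i hi =>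
    (strongConcaveOn_log_Ioc.strongConcaveOnWith_comp (dotProductBilin ℝ ℝ (ψ i))).mono
      fun θ hθ => hs θ hθ i hi
  simpa using hlog.sub_half_mul_dotProduct_self lam

lemma mem_Ioc_zero_one_of_sum_eq_one {ι : Type*} [Fintype ι] {g : ι → ℝ} (hpos : ∀ i, 0 < g i)
    (hsum : ∑ i, g i = 1) (i : ι) : g i ∈ Set.Ioc 0 1 :=
  ⟨hpos i, hsum ▸ single_le_sum (fun j _ => (hpos j).le) (mem_univ i)⟩

lemma neg_inv_le_log_sub_log {p x y : ℝ} (hp : 0 < p) (hpx : p ≤ x) (hy : y ∈ Set.Ioc 0 1) :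
    -p⁻¹ ≤ Real.log x - Real.log y := by
  have hx := Real.one_sub_inv_le_log_of_pos (hp.trans_le hpx)
  have hy := Real.log_nonpos hy.1.le hy.2
  have hinv := inv_anti₀ hp hpx
  linarith

lemma dotProduct_mulVec_smul_one_add_sum_vecMulVec {n ι : Type*} [Fintype n] [DecidableEq n]
    (lam : ℝ) (I : Finset ι) (ψ : ι → n → ℝ) (v : n → ℝ) :
    v ⬝ᵥ (lam • (1 : Matrix n n ℝ) + ∑ i ∈ I, vecMulVec (ψ i) (ψ i)) *ᵥ v
      = lam * (v ⬝ᵥ v) + ∑ i ∈ I, (ψ i ⬝ᵥ v) ^ 2 := by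
  simp [add_mulVec, smul_mulVec, sum_mulVec, vecMulVec_mulVec, sum_dotProduct, smul_dotProduct,
    dotProduct_comm v, sq]

theorem vbmle_loglik_gap_lower_bound_general
    (d : ℕ)
    (lam pmin : ℝ)
    (hpmin0 : 0 < pmin)
    (S A : Type) [Fintype S]
    (φ : S → A → S → (Fin d → ℝ))
    (P : Set (Fin d → ℝ)) (hPconv : Convex ℝ P)
    (hPsum : ∀ θ ∈ P, ∀ s a, (∑ s', φ s a s' ⬝ᵥ θ) = 1)
    (hPmin : ∀ θ ∈ P, ∀ s a s', pmin ≤ φ s a s' ⬝ᵥ θ)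
    (θstar : Fin d → ℝ) (hθstar : θstar ∈ P)
    (s : ℕ → S) (a : ℕ → A)
    (ℓ : ℕ → (Fin d → ℝ) → ℝ)
    (hℓ : ∀ t θ, ℓ t θ =
      (∑ i ∈ Finset.Icc 1 (t - 1),
        Real.log ((φ (s i) (a i) (s (i + 1)) ⬝ᵥ θ) / (φ (s i) (a i) (s (i + 1)) ⬝ᵥ θstar)))
      - lam / 2 * (θ ⬝ᵥ θ))
    (θhat : ℕ → (Fin d → ℝ))
    (hθhatmem : ∀ t, θhat t ∈ P)
    (hθhatmax : ∀ t, 1 ≤ t → ∀ θ ∈ P, ℓ t θ ≤ ℓ t (θhat t))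
    (A_ : ℕ → Matrix (Fin d) (Fin d) ℝ)
    (hA : ∀ t, A_ t = lam • (1 : Matrix (Fin d) (Fin d) ℝ) +
      ∑ i ∈ Finset.Icc 1 (t - 1),
        vecMulVec (φ (s i) (a i) (s (i + 1))) (φ (s i) (a i) (s (i + 1)))) :
    ∀ t, 1 ≤ t →
      ℓ (t + 1) (θhat t) - ℓ (t + 1) θstar ≥
        1 / 2 * ((θhat t - θstar) ⬝ᵥ (A_ t) *ᵥ (θhat t - θstar)) - 1 / pmin := by
  intro t ht
  obtain ⟨k, rfl⟩ := Nat.exists_eq_add_of_le' ht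
  let ψ : ℕ → Fin d → ℝ := fun i => φ (s i) (a i) (s (i + 1))
  have hψP : ∀ θ ∈ P, ∀ i, ψ i ⬝ᵥ θ ∈ Set.Ioc 0 1 := fun θ hθ i =>
    mem_Ioc_zero_one_of_sum_eq_one (fun _ => hpmin0.trans_le (hPmin θ hθ _ _ _)) (hPsum θ hθ _ _) _
  let F : ℕ → (Fin d → ℝ) → ℝ := fun n θ =>
    ∑ i ∈ Icc 1 n, Real.log (ψ i ⬝ᵥ θ) - lam / 2 * (θ ⬝ᵥ θ)
  have hℓF : ∀ n, ∀ θ ∈ P, ℓ (n + 1) θ = F n θ - ∑ i ∈ Icc 1 n, Real.log (ψ i ⬝ᵥ θstar) := by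
    intro n θ hθ
    rw [hℓ, Nat.add_sub_cancel, sub_right_comm, ← sum_sub_distrib]
    exact congrArg (· - _) (sum_congr rfl fun i _ =>
      Real.log_div (hψP θ hθ i).1.ne' (hψP θstar hθstar i).1.ne')
  have hFsucc : ∀ θ, F (k + 1) θ = F k θ + Real.log (ψ (k + 1) ⬝ᵥ θ) := fun θ => by
    simp only [F, sum_Icc_succ_top (by omega : 1 ≤ k + 1)]
    ring
  have hmax : IsMaxOn (F k) P (θhat (k + 1)) := isMaxOn_iff.2 fun θ hθ => by
    have h := hθhatmax (k + 1) ht θ hθ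
    rw [hℓF k θ hθ, hℓF k _ (hθhatmem _)] at h
    linarith
  have hgap : _ / 2 ≤ F k (θhat (k + 1)) - F k θstar :=
    (strongConcaveOnWith_sum_log_dotProduct_sub (Icc 1 k) ψ lam fun θ hθ i _ => hψP θ hθ i)
      |>.half_le_sub_of_isMaxOn hPconv hmax (hθhatmem _) hθstar
  have hlast : -pmin⁻¹ ≤ Real.log (ψ (k + 1) ⬝ᵥ θhat (k + 1)) - Real.log (ψ (k + 1) ⬝ᵥ θstar) :=
    neg_inv_le_log_sub_log hpmin0 (hPmin _ (hθhatmem _) _ _ _) (hψP θstar hθstar _)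
  rw [hℓF _ _ (hθhatmem _), hℓF _ _ hθstar, hFsucc, hFsucc, hA, Nat.add_sub_cancel,
    dotProduct_mulVec_smul_one_add_sum_vecMulVec, one_div pmin]
  linarith

/-- for every `t ≥ 1`,
`ℓ_{t+1}(θ̂_t) − ℓ_{t+1}(θ*) ≥ (1/2)·‖θ̂_t − θ*‖²_{A_t} − 1/p_min`. -/
theorem vbmle_loglik_gap_lower_bound
    (d : ℕ) (hd : 1 ≤ d)
    (lam L pmin : ℝ) (hlam : 0 ≤ lam) (hL : 0 < L)
    (hpmin0 : 0 < pmin) (hpmin1 : pmin ≤ 1)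
    (S A : Type) [Fintype S] [Nonempty S] [Fintype A] [Nonempty A]
    (φ : S → A → S → (Fin d → ℝ))
    (hφ : ∀ s a s', Real.sqrt (φ s a s' ⬝ᵥ φ s a s') ≤ L)
    (P : Set (Fin d → ℝ)) (hPne : P.Nonempty) (hPcomp : IsCompact P) (hPconv : Convex ℝ P)
    (hPsum : ∀ θ ∈ P, ∀ s a, (∑ s', φ s a s' ⬝ᵥ θ) = 1)
    (hPmin : ∀ θ ∈ P, ∀ s a s', pmin ≤ φ s a s' ⬝ᵥ θ)
    (θstar : Fin d → ℝ) (hθstar : θstar ∈ P)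
    (s : ℕ → S) (a : ℕ → A)
    (ℓ : ℕ → (Fin d → ℝ) → ℝ)
    (hℓ : ∀ t θ, ℓ t θ =
      (∑ i ∈ Finset.Icc 1 (t - 1),
        Real.log ((φ (s i) (a i) (s (i + 1)) ⬝ᵥ θ) / (φ (s i) (a i) (s (i + 1)) ⬝ᵥ θstar)))
      - lam / 2 * (θ ⬝ᵥ θ))
    (θhat : ℕ → (Fin d → ℝ))
    (hθhatmem : ∀ t, θhat t ∈ P)
    (hθhatmax : ∀ t, 1 ≤ t → ∀ θ ∈ P, ℓ t θ ≤ ℓ t (θhat t))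
    (A_ : ℕ → Matrix (Fin d) (Fin d) ℝ)
    (hA : ∀ t, A_ t = lam • (1 : Matrix (Fin d) (Fin d) ℝ) +
      ∑ i ∈ Finset.Icc 1 (t - 1),
        vecMulVec (φ (s i) (a i) (s (i + 1))) (φ (s i) (a i) (s (i + 1)))) :
    ∀ t, 1 ≤ t →
      ℓ (t + 1) (θhat t) - ℓ (t + 1) θstar ≥
        1 / 2 * ((θhat t - θstar) ⬝ᵥ (A_ t) *ᵥ (θhat t - θstar)) - 1 / pmin :=
  vbmle_loglik_gap_lower_bound_general d lam pmin hpmin0 S A φ P hPconv hPsum hPmin θstar hθstar s a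
    ℓ hℓ θhat hθhatmem hθhatmax A_ hA
end
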